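/- Let X ⊆ ℂⁿ be open and let f : X → ℂ be holomorphic on a convex open set X. Then for each fixed z ∈ X there exist holomorphic functions h_1(ζ,z),…,h_n(ζ,z), holomorphic in both ζ and z, such that f(ζ) − f(z) = Σ_{j=1}^n (ζ_j − z_j) h_j(ζ, z) for all ζ, z ∈ X (a Hefer decomposition). -/

import Mathlib

/-!
Take `h_j(ζ, z) = ∫₀¹ ∂_j f(z + t (ζ - z)) dt`; the identity is the fundamental theorem of
calculus along the segment `[z, ζ] ⊆ X`. Joint holomorphy comes from differentiating under the
integral sign, where the domination is supplied by the Cauchy estimates: the derivative of a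
holomorphic function on a compact set is bounded by its values on a slightly larger compact set.
The same argument, applied to Cauchy's formula `∂_v f(w) = (2πi)⁻¹ ∮ f(w + u v) u⁻² du`, shows
that the partial derivatives `∂_j f` are holomorphic in the first place.
-/

open Metric Set Filter Topology MeasureTheory intervalIntegral
open scoped Interval Real

namespace Complex

variable {E F : Type*} [NormedAddCommGroup E] [NormedSpace ℂ E]
  [NormedAddCommGroup F] [NormedSpace ℂ F]

theorem norm_fderiv_le_of_forall_mem_closedBall_norm_le {f : E → F} {w : E} {r C : ℝ}
    (hr : 0 < r) (hf : DifferentiableOn ℂ f (closedBall w r))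
    (hC : ∀ x ∈ closedBall w r, ‖f x‖ ≤ C) : ‖fderiv ℂ f w‖ ≤ C / r := by
  have hC0 : 0 ≤ C := (norm_nonneg _).trans (hC w (mem_closedBall_self hr.le))
  refine ContinuousLinearMap.opNorm_le_bound _ (by positivity) fun v => ?_
  rcases eq_or_ne v 0 with rfl | hv
  · simp
  have hv' : 0 < ‖v‖ := norm_pos_iff.2 hv
  set line : ℂ → E := fun u => w + u • v
  have hline : ∀ u, HasDerivAt line v u := fun u => by
    simpa only [id, one_smul] using ((hasDerivAt_id u).smul_const v).const_add w
  have hmaps : MapsTo line (closedBall 0 (r / ‖v‖)) (closedBall w r) := fun u hu => by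
    rw [mem_closedBall_zero_iff, le_div_iff₀ hv'] at hu
    simpa [line, norm_smul] using hu
  have hd : DiffContOnCl ℂ (f ∘ line) (ball 0 (r / ‖v‖)) :=
    ((hf.comp (fun u _ => (hline u).differentiableAt.differentiableWithinAt) hmaps).mono
      closure_ball_subset_closedBall).diffContOnCl
  calc ‖fderiv ℂ f w v‖ = ‖deriv (f ∘ line) 0‖ := by
        rw [← (hf.differentiableAt (closedBall_mem_nhds w hr)).lineDeriv_eq_fderiv]; rfl
    _ ≤ C / (r / ‖v‖) := norm_deriv_le_of_forall_mem_sphere_norm_le (by positivity) hd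
        fun u hu => hC _ (hmaps (sphere_subset_closedBall hu))
    _ = C / r * ‖v‖ := by field_simp

theorem exists_norm_fderiv_le_of_isCompact [ProperSpace E] {f : E → F} {U K : Set E}
    (hU : IsOpen U) (hf : DifferentiableOn ℂ f U) (hK : IsCompact K) (hKU : K ⊆ U) :
    ∃ M, ∀ w ∈ K, ‖fderiv ℂ f w‖ ≤ M := by
  obtain ⟨δ, hδ, hδU⟩ := hK.exists_cthickening_subset_open hU hKU
  obtain ⟨C, hC⟩ := hK.cthickening.exists_bound_of_continuousOn (hf.continuousOn.mono hδU)
  refine ⟨C / δ, fun w hw => ?_⟩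
  have hball : closedBall w δ ⊆ cthickening δ K := closedBall_subset_cthickening hw δ
  exact norm_fderiv_le_of_forall_mem_closedBall_norm_le hδ (hf.mono (hball.trans hδU))
    fun x hx => hC x (hball hx)

variable {H : Type*} [NormedAddCommGroup H] [NormedSpace ℂ H]

theorem differentiableAt_integral_smul_comp_affine [FiniteDimensional ℂ E]
    [FiniteDimensional ℂ H] [CompleteSpace F] [SecondCountableTopology F]
    {g : E → F} {U : Set E} (hU : IsOpen U) (hg : DifferentiableOn ℂ g U)
    {Φ : H → ℝ → E} {Φ' : ℝ → H →L[ℂ] E} {c : ℝ → ℂ} {a b : ℝ} {p₀ : H}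
    (hΦ : Continuous (Function.uncurry Φ)) (hΦ' : Continuous Φ')
    (hΦΦ' : ∀ p t, HasFDerivAt (Φ · t) (Φ' t) p) (hc : Continuous c)
    (hp₀ : ∀ t ∈ [[a, b]], Φ p₀ t ∈ U) :
    DifferentiableAt ℂ (fun p => ∫ t in a..b, c t • g (Φ p t)) p₀ := by
  borelize E
  set K := Φ p₀ '' [[a, b]]
  have hK : IsCompact K :=
    isCompact_uIcc.image (hΦ.comp (Continuous.prodMk_right p₀))
  obtain ⟨δ, hδ, hδU⟩ := hK.exists_cthickening_subset_open hU (image_subset_iff.2 hp₀)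
  obtain ⟨M, hM⟩ := exists_norm_fderiv_le_of_isCompact hU hg hK.cthickening hδU
  obtain ⟨s, hs, hsK⟩ : ∃ s ∈ 𝓝 p₀, ∀ p ∈ s, ∀ t ∈ [[a, b]], Φ p t ∈ cthickening δ K := by
    refine (isCompact_uIcc.eventually_forall_of_forall_eventually fun t ht => ?_).exists_mem
    have hmem : Φ p₀ t ∈ thickening δ K := self_subset_thickening hδ _ ⟨t, ht, rfl⟩
    exact mem_of_superset ((hΦ.continuousAt (x := (p₀, t))).preimage_mem_nhds
      (isOpen_thickening.mem_nhds hmem)) fun q hq => thickening_subset_cthickening δ K hq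
  have hsU : ∀ p ∈ s, ∀ t ∈ [[a, b]], Φ p t ∈ U := fun p hp t ht => hδU (hsK p hp t ht)
  have hcont : ∀ p ∈ s, ContinuousOn (fun t => c t • g (Φ p t)) [[a, b]] := fun p hp =>
    hc.continuousOn.smul (hg.continuousOn.comp (hΦ.comp (Continuous.prodMk_right p)).continuousOn
      (hsU p hp))
  refine (intervalIntegral.hasFDerivAt_integral_of_dominated_of_fderiv_le
    (F' := fun p t => c t • (fderiv ℂ g (Φ p t)).comp (Φ' t))
    (bound := fun t => ‖c t‖ * (M * ‖Φ' t‖)) hs ?_ ?_ ?_ ?_ ?_ ?_).differentiableAt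
  · filter_upwards [hs] with p hp
    exact ((hcont p hp).mono uIoc_subset_uIcc).aestronglyMeasurable measurableSet_uIoc
  · exact (hcont p₀ (mem_of_mem_nhds hs)).intervalIntegrable
  · have hmeas : Measurable fun t => fderiv ℂ g (Φ p₀ t) :=
      (measurable_fderiv ℂ g).comp (hΦ.comp (Continuous.prodMk_right p₀)).measurable
    exact (hc.measurable.smul (isBoundedBilinearMap_comp.continuous.measurable.comp
      (hmeas.prodMk hΦ'.measurable))).aestronglyMeasurable
  · refine ae_of_all _ fun t ht p hp => ?_
    calc ‖c t • (fderiv ℂ g (Φ p t)).comp (Φ' t)‖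
        ≤ ‖c t‖ * (‖fderiv ℂ g (Φ p t)‖ * ‖Φ' t‖) := by
          rw [norm_smul]; gcongr; exact ContinuousLinearMap.opNorm_comp_le _ _
      _ ≤ ‖c t‖ * (M * ‖Φ' t‖) := by gcongr; exact hM _ (hsK p hp t (uIoc_subset_uIcc ht))
  · exact (by fun_prop : Continuous fun t => ‖c t‖ * (M * ‖Φ' t‖)).intervalIntegrable _ _
  · refine ae_of_all _ fun t ht p hp => ?_
    have hgd := (hg.differentiableAt (hU.mem_nhds (hsU p hp t (uIoc_subset_uIcc ht)))).hasFDerivAt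
    exact (hgd.comp p (hΦΦ' p t)).const_smul (c t)

theorem differentiableOn_fderiv_apply [FiniteDimensional ℂ E] [CompleteSpace F]
    [SecondCountableTopology F] {f : E → F} {U : Set E} (hU : IsOpen U)
    (hf : DifferentiableOn ℂ f U) (v : E) :
    DifferentiableOn ℂ (fun w => fderiv ℂ f w v) U := by
  intro w₀ hw₀
  obtain ⟨ε, hε, hεU⟩ := Metric.isOpen_iff.1 hU w₀ hw₀
  set r := ε / (2 * (‖v‖ + 1))
  have hr : 0 < r := by positivity
  have hmem : ∀ w ∈ ball w₀ (ε / 2), ∀ u : ℂ, ‖u‖ ≤ r → w + u • v ∈ U := by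
    intro w hw u hu
    have hrv : r * ‖v‖ < ε / 2 := by
      rw [div_mul_eq_mul_div, div_lt_div_iff₀ (by positivity) two_pos]; nlinarith
    refine hεU (mem_ball_iff_norm.2 ?_)
    calc ‖w + u • v - w₀‖ ≤ ‖w - w₀‖ + ‖u‖ * ‖v‖ := by
          rw [add_sub_right_comm, ← norm_smul]; exact norm_add_le _ _
      _ < ε / 2 + ε / 2 := add_lt_add_of_lt_of_le (mem_ball_iff_norm.1 hw)
          ((mul_le_mul_of_nonneg_right hu (norm_nonneg v)).trans hrv.le)
      _ = ε := add_halves ε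
  -- Cauchy's formula for the derivative of `u ↦ f (w + u • v)` at `0`, on the circle `|u| = r`
  set c : ℝ → ℂ := fun θ => I * (circleMap 0 r θ)⁻¹
  have hcauchy : ∀ w ∈ ball w₀ (ε / 2),
      fderiv ℂ f w v = (2 * π * I)⁻¹ • ∫ θ in 0..2 * π, c θ • f (w + circleMap 0 r θ • v) := by
    intro w hw
    have hfw : DifferentiableAt ℂ f w :=
      hf.differentiableAt (hU.mem_nhds (by simpa using hmem w hw 0 (by simp [hr.le])))
    have hline : DifferentiableOn ℂ (fun u : ℂ => f (w + u • v)) (closedBall 0 r) := fun u hu =>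
      ((hf.differentiableAt (hU.mem_nhds (hmem w hw u (mem_closedBall_zero_iff.1 hu)))).comp u
        (by fun_prop)).differentiableWithinAt
    rw [← hfw.lineDeriv_eq_fderiv, eq_comm, inv_smul_eq_iff₀ two_pi_I_ne_zero, lineDeriv,
      ← hline.deriv_eq_smul_circleIntegral hr, circleIntegral]
    refine integral_congr fun θ _ => ?_
    have hθ : circleMap 0 r θ ≠ 0 := circleMap_ne_center hr.ne'
    simp only [c, deriv_circleMap, smul_smul, sub_zero]
    congr 1
    field_simp
  have hc : Continuous c :=
    continuous_const.mul ((continuous_circleMap 0 r).inv₀ fun θ => circleMap_ne_center hr.ne')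
  have hint : DifferentiableAt ℂ
      (fun w => ∫ θ in 0..2 * π, c θ • f (w + circleMap 0 r θ • v)) w₀ :=
    differentiableAt_integral_smul_comp_affine hU hf (Φ' := fun _ => ContinuousLinearMap.id ℂ E)
      (by fun_prop) continuous_const (fun w θ => (hasFDerivAt_id w).add_const _) hc
      fun θ _ => hmem w₀ (mem_ball_self (half_pos hε)) _ (by simp [abs_of_pos hr])
  exact ((hint.const_smul _).congr_of_eventuallyEq
    (eventuallyEq_of_mem (ball_mem_nhds w₀ (half_pos hε)) hcauchy)).differentiableWithinAt

theorem sub_eq_integral_fderiv_segment [CompleteSpace F] {f : E → F} {U : Set E}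
    (hU : IsOpen U) (hf : DifferentiableOn ℂ f U) {z ζ : E}
    (hseg : ∀ t ∈ [[(0 : ℝ), 1]], z + t • (ζ - z) ∈ U)
    (hcont : ContinuousOn (fun w => fderiv ℂ f w (ζ - z)) U) :
    f ζ - f z = ∫ t in (0 : ℝ)..1, fderiv ℂ f (z + t • (ζ - z)) (ζ - z) := by
  have hderiv : ∀ t ∈ [[(0 : ℝ), 1]], HasDerivAt (fun t : ℝ => f (z + t • (ζ - z)))
      (fderiv ℂ f (z + t • (ζ - z)) (ζ - z)) t := fun t ht => by
    have hfd := (hf.differentiableAt (hU.mem_nhds (hseg t ht))).hasFDerivAt.restrictScalars ℝ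
    simpa [Function.comp_def] using
      hfd.comp_hasDerivAt t (((hasDerivAt_id t).smul_const (ζ - z)).const_add z)
  have hint : IntervalIntegrable (fun t : ℝ => fderiv ℂ f (z + t • (ζ - z)) (ζ - z)) volume 0 1 :=
    (hcont.comp (by fun_prop) hseg).intervalIntegrable
  simpa using (integral_eq_sub_of_hasDerivAt hderiv hint).symm

theorem differentiableOn_integral_comp_segment [FiniteDimensional ℂ E] [CompleteSpace F]
    [SecondCountableTopology F] {g : E → F} {X : Set E} (hXo : IsOpen X) (hXc : Convex ℝ X)
    (hg : DifferentiableOn ℂ g X) :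
    DifferentiableOn ℂ (fun p : E × E => ∫ t in (0 : ℝ)..1, g (p.2 + t • (p.1 - p.2))) (X ×ˢ X) :=
  fun p hp => by
    simpa using (differentiableAt_integral_smul_comp_affine hXo hg (c := fun _ => 1)
      (Φ := fun (q : E × E) (t : ℝ) => q.2 + t • (q.1 - q.2))
      (Φ' := fun t : ℝ => ContinuousLinearMap.snd ℂ E E +
        t • (ContinuousLinearMap.fst ℂ E E - ContinuousLinearMap.snd ℂ E E))
      (by fun_prop) (by fun_prop)
      (fun q t => hasFDerivAt_snd.add ((hasFDerivAt_fst.sub hasFDerivAt_snd).const_smul t))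
      continuous_const fun t ht => hXc.add_smul_sub_mem hp.2 hp.1
        (by rwa [uIcc_of_le zero_le_one] at ht)).differentiableWithinAt

end Complex

open Complex

/-- Hefer decomposition: if `f` is holomorphic on a convex open set `X ⊆ ℂⁿ`,
there are functions `h_j(ζ, z)`, holomorphic jointly in `(ζ, z)` on `X × X`,
with `f(ζ) − f(z) = Σ_j (ζ_j − z_j) h_j(ζ, z)`. -/
theorem hefer_decomposition (n : ℕ) (X : Set (Fin n → ℂ)) (hXo : IsOpen X)
    (hXc : Convex ℝ X) (f : (Fin n → ℂ) → ℂ) (hf : DifferentiableOn ℂ f X) :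
    ∃ h : Fin n → ((Fin n → ℂ) × (Fin n → ℂ)) → ℂ,
      (∀ j, DifferentiableOn ℂ (h j) (X ×ˢ X)) ∧
      ∀ ζ ∈ X, ∀ z ∈ X,
        f ζ - f z = ∑ j, (ζ j - z j) * h j (ζ, z) := by
  set g : Fin n → (Fin n → ℂ) → ℂ := fun j w => fderiv ℂ f w (Pi.single j 1)
  have hg : ∀ j, DifferentiableOn ℂ (g j) X := fun j => differentiableOn_fderiv_apply hXo hf _
  refine ⟨fun j p => ∫ t in (0 : ℝ)..1, g j (p.2 + t • (p.1 - p.2)),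
    fun j => differentiableOn_integral_comp_segment hXo hXc (hg j), fun ζ hζ z hz => ?_⟩
  have hseg : ∀ t ∈ [[(0 : ℝ), 1]], z + t • (ζ - z) ∈ X := fun t ht =>
    hXc.add_smul_sub_mem hz hζ (by rwa [uIcc_of_le zero_le_one] at ht)
  have hsplit : ∀ w, fderiv ℂ f w (ζ - z) = ∑ j, (ζ j - z j) * g j w := fun w => by
    conv_lhs => rw [pi_eq_sum_univ' (ζ - z)]
    simp [g]
  have hint : ∀ j, IntervalIntegrable (fun t : ℝ => (ζ j - z j) * g j (z + t • (ζ - z)))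
      volume 0 1 := fun j =>
    ((hg j).continuousOn.comp (by fun_prop) hseg).intervalIntegrable.const_mul _
  rw [sub_eq_integral_fderiv_segment hXo hf hseg
    (differentiableOn_fderiv_apply hXo hf _).continuousOn]
  simp only [hsplit]
  rw [integral_finsetSum fun j _ => hint j]
  simp only [intervalIntegral.integral_const_mul]
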